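/- arXiv:1107.0839 — 2 statements merged into one kernel-verified Lean document; each statement's English description precedes it below -/
import Mathlib

section
/- Let C be a compact subset of 𝒳 × P, where 𝒳 ⊂ L²(Ω,ℱ,ℙ) is closed, convex and bounded, and P ⊂ ℝ is compact. For θ ∈ Θ = [a,1], let ℒ(θ, C) = argmax{ E[X] − θ Var[X] − p : (X,p) ∈ C }. Then the union ⋃_{θ ∈ Θ} ℒ(θ, C) is a closed subset of 𝒳 × P. -/
/-!
The mean is the inner product with the constant `1` and `E[X²] = ‖X‖²`, so the utility is jointly
continuous in `(θ, X, p)`. Hence the pairs `(θ, c) ∈ Θ × C` for which `c` is a best response of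
type `θ` form a closed subset of the compact set `Θ × C`, and the union of the best-response sets
is its projection: compact, hence closed.
-/

open MeasureTheory

theorem isCompact_biUnion_setOf_forall_le {Θ X α : Type*} [TopologicalSpace Θ] [TopologicalSpace X]
    [TopologicalSpace α] [LinearOrder α] [OrderClosedTopology α]
    {f : Θ → X → α} (hf : Continuous (Function.uncurry f)) {K : Set Θ} (hK : IsCompact K)
    {C : Set X} (hC : IsCompact C) :
    IsCompact (⋃ θ ∈ K, {c ∈ C | ∀ c' ∈ C, f θ c' ≤ f θ c}) := by
  have hgraph : IsCompact ((K ×ˢ C) ∩ ⋂ c' ∈ C, {p : Θ × X | f p.1 c' ≤ f p.1 p.2}) :=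
    (hK.prod hC).inter_right <| isClosed_biInter fun c' _ =>
      isClosed_le (hf.comp (continuous_fst.prodMk continuous_const)) hf
  convert hgraph.image continuous_snd using 1
  ext c
  constructor
  · rintro ⟨_, ⟨θ, rfl⟩, _, ⟨hθ, rfl⟩, hcC, hmax⟩
    exact ⟨(θ, c), ⟨⟨hθ, hcC⟩, Set.mem_iInter₂.2 hmax⟩, rfl⟩
  · rintro ⟨⟨θ, c⟩, ⟨⟨hθ, hcC⟩, hmax⟩, rfl⟩
    exact Set.mem_biUnion hθ ⟨hcC, fun c' hc' => Set.mem_iInter₂.1 hmax c' hc'⟩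

namespace MeasureTheory.L2

variable {Ω : Type*} [MeasurableSpace Ω] {P : Measure Ω}

theorem integral_sq_eq_norm_sq (X : Lp ℝ 2 P) : ∫ ω, X ω ^ 2 ∂P = ‖X‖ ^ 2 := by
  rw [← real_inner_self_eq_norm_sq, inner_def]
  simp [sq]

variable [IsFiniteMeasure P]

theorem integral_eq_inner_one (X : Lp ℝ 2 P) :
    ∫ ω, X ω ∂P =
      inner ℝ (indicatorConstLp 2 MeasurableSet.univ (measure_ne_top P _) (1 : ℝ)) X := by
  rw [inner_indicatorConstLp_one, setIntegral_univ]

theorem continuous_integral : Continuous fun X : Lp ℝ 2 P => ∫ ω, X ω ∂P := by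
  simp_rw [integral_eq_inner_one]
  fun_prop

end MeasureTheory.L2

section MeanVariance

variable {Ω : Type*} [MeasurableSpace Ω] (P : Measure Ω)

noncomputable def meanVarianceUtility (θ : ℝ) (c : Lp ℝ 2 P × ℝ) : ℝ :=
  (∫ ω, (c.1 : Ω → ℝ) ω ∂P)
    - θ * ((∫ ω, ((c.1 : Ω → ℝ) ω) ^ 2 ∂P) - (∫ ω, (c.1 : Ω → ℝ) ω ∂P) ^ 2) - c.2

theorem continuous_uncurry_meanVarianceUtility [IsFiniteMeasure P] :
    Continuous (Function.uncurry (meanVarianceUtility P)) := by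
  have hmean : Continuous fun p : ℝ × (Lp ℝ 2 P × ℝ) => ∫ ω, (p.2.1 : Ω → ℝ) ω ∂P :=
    L2.continuous_integral.comp (continuous_fst.comp continuous_snd)
  simp only [Function.uncurry_def, meanVarianceUtility, L2.integral_sq_eq_norm_sq]
  fun_prop

end MeanVariance

theorem stmt2_general {Ω : Type*} [MeasurableSpace Ω] (P : Measure Ω) [IsProbabilityMeasure P]
    (a : ℝ)
    (C : Set (Lp ℝ 2 P × ℝ)) (hC : IsCompact C)
    (u : ℝ → Lp ℝ 2 P × ℝ → ℝ)
    (hu : ∀ θ c, u θ c = (∫ ω, (c.1 : Ω → ℝ) ω ∂P)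
      - θ * ((∫ ω, ((c.1 : Ω → ℝ) ω) ^ 2 ∂P) - (∫ ω, (c.1 : Ω → ℝ) ω ∂P) ^ 2) - c.2) :
    IsClosed (⋃ θ ∈ Set.Icc a 1, {c ∈ C | ∀ c' ∈ C, u θ c' ≤ u θ c}) := by
  obtain rfl : u = meanVarianceUtility P := funext₂ hu
  exact (isCompact_biUnion_setOf_forall_le (continuous_uncurry_meanVarianceUtility P)
    isCompact_Icc hC).isClosed

/-- The union over types θ ∈ [a,1] of the best-response sets ℒ(θ,C) is closed. -/
theorem stmt2 {Ω : Type*} [MeasurableSpace Ω] (P : Measure Ω) [IsProbabilityMeasure P]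
    (a : ℝ) (ha : 0 < a) (ha1 : a ≤ 1)
    (𝒳 : Set (Lp ℝ 2 P)) (h𝒳c : IsClosed 𝒳) (h𝒳conv : Convex ℝ 𝒳)
    (h𝒳b : Bornology.IsBounded 𝒳)
    (Pr : Set ℝ) (hPr : IsCompact Pr)
    (C : Set (Lp ℝ 2 P × ℝ)) (hC : IsCompact C) (hCsub : C ⊆ 𝒳 ×ˢ Pr)
    (u : ℝ → Lp ℝ 2 P × ℝ → ℝ)
    (hu : ∀ θ c, u θ c = (∫ ω, (c.1 : Ω → ℝ) ω ∂P)
      - θ * ((∫ ω, ((c.1 : Ω → ℝ) ω) ^ 2 ∂P) - (∫ ω, (c.1 : Ω → ℝ) ω ∂P) ^ 2) - c.2) :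
    IsClosed (⋃ θ ∈ Set.Icc a 1, {c ∈ C | ∀ c' ∈ C, u θ c' ≤ u θ c}) :=
  stmt2_general P a C hC u hu
end

section
/- Let (S,d) be a metric space, Θ a measure space with finite measure μ, and for i = 1, 2 let π_i : Θ × S → ℝ be bounded, measurable in θ and such that (θ, s) ↦ max{π₁(θ,s), π₂(θ,s)} is upper semicontinuous in s for each θ, with a uniform integrable bound. Suppose for each s a tie-breaking rule f^s : Θ → [0,1] is chosen such that Σᵢ ∫_Θ πᵢ(θ,s) fᵢ^s(θ) dμ = sup over all measurable f : Θ → [0,1] of Σᵢ ∫_Θ πᵢ(θ,s) fᵢ(θ) dμ, where f₁ = f and f₂ = 1 − f. Then Σᵢ ∫_Θ πᵢ(θ,s) fᵢ^s(θ) dμ = ∫_Θ max{π₁(θ,s), π₂(θ,s)} dμ, and s ↦ Σᵢ ∫_Θ πᵢ(θ,s) fᵢ^s(θ) dμ is upper semicontinuous. -/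
/-!
Pointwise in `θ`, a convex combination of two profits is at most their maximum, and choosing
the better one on `{π₂ ≤ π₁}` attains it; so an efficient rule yields exactly `∫ max π₁ π₂`.
For upper semicontinuity, `B - max π₁ π₂` is nonnegative and lower semicontinuous in `s`, and
Fatou's lemma along the countably generated filter `𝓝 s` makes its integral lower
semicontinuous.
-/

open MeasureTheory Filter

open scoped ENNReal Topology

theorem lowerSemicontinuous_of_ennreal_ofReal {S : Type*} [TopologicalSpace S]
    {φ : S → ℝ} (hφ : ∀ s, 0 ≤ φ s) (h : LowerSemicontinuous fun s => ENNReal.ofReal (φ s)) :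
    LowerSemicontinuous φ := by
  intro s y hy
  rcases lt_or_ge y 0 with hy0 | hy0
  · exact Eventually.of_forall fun t => hy0.trans_le (hφ t)
  · filter_upwards [h s (ENNReal.ofReal y) ((ENNReal.ofReal_lt_ofReal_iff_of_nonneg hy0).2 hy)]
      with t ht
    exact (ENNReal.ofReal_lt_ofReal_iff_of_nonneg hy0).1 ht

section Semicontinuity

variable {S Θ : Type*} [TopologicalSpace S] [FirstCountableTopology S] [MeasurableSpace Θ]
  {μ : Measure Θ}

theorem lowerSemicontinuous_lintegral {f : Θ → S → ℝ≥0∞} (hf_meas : ∀ s, AEMeasurable (f · s) μ)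
    (hf : ∀ θ, LowerSemicontinuous (f θ)) : LowerSemicontinuous fun s => ∫⁻ θ, f θ s ∂μ :=
  lowerSemicontinuous_iff_le_liminf.2 fun s =>
    calc ∫⁻ θ, f θ s ∂μ ≤ ∫⁻ θ, liminf (f θ) (𝓝 s) ∂μ :=
          lintegral_mono fun θ => (hf θ).le_liminf s
      _ ≤ liminf (fun t => ∫⁻ θ, f θ t ∂μ) (𝓝 s) := lintegral_liminf_le' hf_meas

theorem upperSemicontinuous_integral_of_le {F : Θ → S → ℝ} {g : Θ → ℝ} (hg : Integrable g μ)
    (hF_int : ∀ s, Integrable (F · s) μ)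
    (hFg : ∀ θ s, F θ s ≤ g θ) (hF : ∀ θ, UpperSemicontinuous (F θ)) :
    UpperSemicontinuous fun s => ∫ θ, F θ s ∂μ := by
  have hsub : Antitone fun x : ℝ => (∫ θ, g θ ∂μ) - x := fun _ _ h => sub_le_sub_left h _
  have hint : ∀ s, Integrable (fun θ => g θ - F θ s) μ := fun s => hg.sub (hF_int s)
  have hgap : LowerSemicontinuous fun s => ∫ θ, g θ - F θ s ∂μ := by
    refine lowerSemicontinuous_of_ennreal_ofReal
      (fun s => integral_nonneg fun θ => sub_nonneg.2 (hFg θ s)) ?_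
    rw [funext fun s => ofReal_integral_eq_lintegral_ofReal (hint s)
      (ae_of_all _ fun θ => sub_nonneg.2 (hFg θ s))]
    refine lowerSemicontinuous_lintegral (fun s => (hint s).aemeasurable.ennreal_ofReal)
      fun θ => ?_
    exact (ENNReal.continuous_ofReal.comp (continuous_const.sub continuous_id))
      |>.comp_upperSemicontinuous_antitone (hF θ)
        fun _ _ h => ENNReal.ofReal_le_ofReal (sub_le_sub_left h _)
  have hsplit : (fun s => ∫ θ, F θ s ∂μ) = fun s => (∫ θ, g θ ∂μ) - ∫ θ, g θ - F θ s ∂μ := by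
    funext s
    rw [integral_sub hg (hF_int s), sub_sub_cancel]
  rw [hsplit]
  exact (continuous_const.sub continuous_id).comp_lowerSemicontinuous_antitone hgap hsub

end Semicontinuity

section Efficiency

variable {Θ : Type*} [MeasurableSpace Θ] {μ : Measure Θ} {p q f : Θ → ℝ}

theorem mul_add_mul_one_sub_le_max {a b t : ℝ} (ht : t ∈ Set.Icc (0 : ℝ) 1) :
    a * t + b * (1 - t) ≤ max a b := by
  obtain ⟨h0, h1⟩ := ht
  nlinarith [le_max_left a b, le_max_right a b]

theorem integral_mul_add_mul_one_sub_le_integral_max (hp : Integrable p μ) (hq : Integrable q μ)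
    (hf : AEStronglyMeasurable f μ) (hf01 : ∀ θ, f θ ∈ Set.Icc (0 : ℝ) 1) :
    ∫ θ, p θ * f θ + q θ * (1 - f θ) ∂μ ≤ ∫ θ, max (p θ) (q θ) ∂μ := by
  have hbound : ∀ θ, ‖f θ‖ ≤ 1 := fun θ => by
    rw [Real.norm_eq_abs, abs_le]; constructor <;> linarith [(hf01 θ).1, (hf01 θ).2]
  have hbound' : ∀ θ, ‖1 - f θ‖ ≤ 1 := fun θ => by
    rw [Real.norm_eq_abs, abs_le]; constructor <;> linarith [(hf01 θ).1, (hf01 θ).2]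
  refine integral_mono ?_ (hp.sup hq) fun θ => mul_add_mul_one_sub_le_max (hf01 θ)
  exact (hp.mul_bdd hf (ae_of_all _ hbound)).add
    (hq.mul_bdd (aestronglyMeasurable_const.sub hf) (ae_of_all _ hbound'))

theorem integral_max_le_of_forall_integral_le (hpm : Measurable p) (hqm : Measurable q)
    (heff : ∀ g : Θ → ℝ, Measurable g → (∀ θ, g θ ∈ Set.Icc (0 : ℝ) 1) →
      ∫ θ, p θ * g θ + q θ * (1 - g θ) ∂μ ≤ ∫ θ, p θ * f θ + q θ * (1 - f θ) ∂μ) :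
    ∫ θ, max (p θ) (q θ) ∂μ ≤ ∫ θ, p θ * f θ + q θ * (1 - f θ) ∂μ := by
  set A := {θ | q θ ≤ p θ}
  have hA : MeasurableSet A := measurableSet_le hqm hpm
  have hmax : ∀ θ, p θ * A.indicator 1 θ + q θ * (1 - A.indicator 1 θ) = max (p θ) (q θ) := by
    intro θ
    by_cases hθ : θ ∈ A
    · simp [Set.indicator_of_mem hθ, max_eq_left (show q θ ≤ p θ from hθ)]
    · simp [Set.indicator_of_notMem hθ, max_eq_right (le_of_not_ge (show ¬q θ ≤ p θ from hθ))]
  calc ∫ θ, max (p θ) (q θ) ∂μ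
        = ∫ θ, p θ * A.indicator 1 θ + q θ * (1 - A.indicator 1 θ) ∂μ := by simp_rw [hmax]
    _ ≤ _ := heff _ (measurable_one.indicator hA) fun θ => by
        by_cases hθ : θ ∈ A <;> simp [hθ]

end Efficiency

/-- Under efficient tie-breaking rules the aggregate payoff equals the integral of the
pointwise maximum of the per-type profits, and is upper semicontinuous in the strategy. -/
theorem stmt7 {S : Type*} [MetricSpace S] {Θ : Type*} [MeasurableSpace Θ]
    (μ : Measure Θ) [IsFiniteMeasure μ]
    (π₁ π₂ : Θ → S → ℝ) (B : ℝ)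
    (hmeas : ∀ s : S, Measurable (fun θ => π₁ θ s) ∧ Measurable (fun θ => π₂ θ s))
    (hbdd : ∀ (θ : Θ) (s : S), |π₁ θ s| ≤ B ∧ |π₂ θ s| ≤ B)
    (husc : ∀ θ : Θ, UpperSemicontinuous (fun s => max (π₁ θ s) (π₂ θ s)))
    (f : S → Θ → ℝ)
    (hf01 : ∀ (s : S) (θ : Θ), f s θ ∈ Set.Icc (0 : ℝ) 1)
    (hfmeas : ∀ s, Measurable (f s))
    (heff : ∀ s : S, ∀ g : Θ → ℝ, Measurable g → (∀ θ, g θ ∈ Set.Icc (0 : ℝ) 1) →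
      (∫ θ, π₁ θ s * g θ + π₂ θ s * (1 - g θ) ∂μ) ≤
      ∫ θ, π₁ θ s * f s θ + π₂ θ s * (1 - f s θ) ∂μ) :
    (∀ s : S, (∫ θ, π₁ θ s * f s θ + π₂ θ s * (1 - f s θ) ∂μ)
        = ∫ θ, max (π₁ θ s) (π₂ θ s) ∂μ) ∧
    UpperSemicontinuous (fun s => ∫ θ, π₁ θ s * f s θ + π₂ θ s * (1 - f s θ) ∂μ) := by
  have hint₁ : ∀ s, Integrable (π₁ · s) μ := fun s =>
    .of_bound (hmeas s).1.aestronglyMeasurable B (ae_of_all _ fun θ => (hbdd θ s).1)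
  have hint₂ : ∀ s, Integrable (π₂ · s) μ := fun s =>
    .of_bound (hmeas s).2.aestronglyMeasurable B (ae_of_all _ fun θ => (hbdd θ s).2)
  have heq : ∀ s, (∫ θ, π₁ θ s * f s θ + π₂ θ s * (1 - f s θ) ∂μ)
      = ∫ θ, max (π₁ θ s) (π₂ θ s) ∂μ := fun s =>
    le_antisymm
      (integral_mul_add_mul_one_sub_le_integral_max (hint₁ s) (hint₂ s)
        (hfmeas s).aestronglyMeasurable (hf01 s))
      (integral_max_le_of_forall_integral_le (hmeas s).1 (hmeas s).2 (heff s))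
  refine ⟨heq, ?_⟩
  rw [funext heq]
  exact upperSemicontinuous_integral_of_le (integrable_const B)
    (fun s => (hint₁ s).sup (hint₂ s))
    (fun θ s => max_le (le_of_abs_le (hbdd θ s).1) (le_of_abs_le (hbdd θ s).2)) husc
end
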